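/- The inverse Mills ratio λ(α) = φ(α)/(1 − Φ(α)) is strictly increasing on ℝ. -/

import Mathlib

open MeasureTheory Set

/-- standard normal density -/
noncomputable def phi (x : ℝ) : ℝ := (Real.sqrt (2 * Real.pi))⁻¹ * Real.exp (-x ^ 2 / 2)

/-- standard normal CDF -/
noncomputable def Phi (x : ℝ) : ℝ := ∫ u in Iio x, phi u

/-!
From `φ' = -x φ` and `Φ' = φ` one gets `λ' = λ (λ - x)`, so it suffices to show the Mills
inequality `x (1 - Φ x) < φ x`. Since `-φ` is an antiderivative of `u φ u` vanishing at `+∞`,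
`φ x = ∫_x^∞ u φ u du`, and this exceeds `x ∫_x^∞ φ = x (1 - Φ x)`.
-/

open Filter Topology ProbabilityTheory

theorem setIntegral_pos_of_forall_pos {α : Type*} [MeasurableSpace α] {μ : Measure α}
    {s : Set α} {f : α → ℝ} (hs : MeasurableSet s) (hμs : μ s ≠ 0) (hf : IntegrableOn f s μ)
    (hpos : ∀ x ∈ s, 0 < f x) : 0 < ∫ x in s, f x ∂μ := by
  rw [setIntegral_pos_iff_support_of_nonneg_ae ((ae_restrict_iff' hs).2
    (Eventually.of_forall fun x hx => (hpos x hx).le)) hf]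
  rw [inter_eq_right.2 fun x hx => Function.mem_support.2 (hpos x hx).ne']
  exact pos_iff_ne_zero.2 hμs

theorem phi_eq_gaussianPDFReal : phi = gaussianPDFReal 0 1 := by
  funext x
  simp [phi, gaussianPDFReal]

theorem phi_pos (x : ℝ) : 0 < phi x := by
  rw [phi_eq_gaussianPDFReal]
  exact gaussianPDFReal_pos 0 1 x one_ne_zero

theorem continuous_phi : Continuous phi := by
  unfold phi
  fun_prop

theorem integrable_phi : Integrable phi := by
  rw [phi_eq_gaussianPDFReal]
  exact integrable_gaussianPDFReal 0 1

theorem integral_phi : ∫ x, phi x = 1 := by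
  rw [phi_eq_gaussianPDFReal]
  exact integral_gaussianPDFReal_eq_one 0 one_ne_zero

theorem integrable_mul_phi : Integrable fun x => x * phi x := by
  have h := (integrable_mul_exp_neg_mul_sq (b := 1 / 2) (by norm_num)).const_mul
    (Real.sqrt (2 * Real.pi))⁻¹
  refine h.congr (Eventually.of_forall fun x => ?_)
  simp only [phi]
  ring_nf

theorem hasDerivAt_phi (x : ℝ) : HasDerivAt phi (-x * phi x) x := by
  have hexp : HasDerivAt (fun x : ℝ => -x ^ 2 / 2) (-x) x := by
    refine ((hasDerivAt_pow 2 x).neg.div_const 2).congr_deriv ?_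
    push_cast
    ring
  refine (hexp.exp.const_mul (Real.sqrt (2 * Real.pi))⁻¹).congr_deriv ?_
  unfold phi
  ring

theorem tendsto_phi_atTop : Tendsto phi atTop (𝓝 0) := by
  have hexp : Tendsto (fun x : ℝ => -x ^ 2 / 2) atTop atBot :=
    (tendsto_neg_atTop_atBot.comp (tendsto_pow_atTop two_ne_zero)).atBot_div_const two_pos
  have h := (Real.tendsto_exp_atBot.comp hexp).const_mul (Real.sqrt (2 * Real.pi))⁻¹
  rwa [mul_zero] at h

theorem integral_Ioi_mul_phi (x : ℝ) : ∫ u in Ioi x, u * phi u = phi x := by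
  have h := integral_Ioi_of_hasDerivAt_of_tendsto' (a := x) (f := fun u => -phi u)
    (fun u _ => (hasDerivAt_phi u).neg.congr_deriv (by ring)) integrable_mul_phi.integrableOn
    (by simpa using tendsto_phi_atTop.neg)
  rw [h]
  ring

theorem one_sub_Phi_eq_integral_Ioi (x : ℝ) : 1 - Phi x = ∫ u in Ioi x, phi u := by
  rw [Phi, setIntegral_congr_set Iio_ae_eq_Iic, ← integral_phi,
    ← intervalIntegral.integral_Iic_add_Ioi integrable_phi.integrableOn
      integrable_phi.integrableOn]
  ring

theorem one_sub_Phi_pos (x : ℝ) : 0 < 1 - Phi x := by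
  rw [one_sub_Phi_eq_integral_Ioi]
  exact setIntegral_pos_of_forall_pos measurableSet_Ioi (by simp) integrable_phi.integrableOn
    fun u _ => phi_pos u

theorem hasDerivAt_Phi (x : ℝ) : HasDerivAt Phi (phi x) x := by
  have hPhi : Phi = fun y => Phi 0 + ∫ t in (0 : ℝ)..y, phi t := by
    funext y
    have hdiff := intervalIntegral.integral_Iic_sub_Iic (f := phi) (a := 0) (b := y)
      integrable_phi.integrableOn integrable_phi.integrableOn
    simp only [Phi, setIntegral_congr_set Iio_ae_eq_Iic]
    linarith
  rw [hPhi]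
  have h := intervalIntegral.integral_hasDerivAt_right integrable_phi.intervalIntegrable
    (continuous_phi.stronglyMeasurableAtFilter _ _) continuous_phi.continuousAt (a := 0) (b := x)
  simpa using h.const_add (Phi 0)

theorem mul_one_sub_Phi_lt_phi (x : ℝ) : x * (1 - Phi x) < phi x := by
  have hgap : 0 < ∫ u in Ioi x, (u - x) * phi u :=
    setIntegral_pos_of_forall_pos measurableSet_Ioi (by simp)
      ((integrable_mul_phi.sub (integrable_phi.const_mul x)).integrableOn.congr_fun
        (fun u _ => by simp only [Pi.sub_apply]; ring) measurableSet_Ioi)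
      fun u hu => mul_pos (sub_pos.2 hu) (phi_pos u)
  have hsplit : ∫ u in Ioi x, (u - x) * phi u = phi x - x * (1 - Phi x) := by
    simp_rw [sub_mul]
    rw [integral_sub integrable_mul_phi.integrableOn (integrable_phi.const_mul x).integrableOn,
      integral_Ioi_mul_phi, integral_const_mul, one_sub_Phi_eq_integral_Ioi]
  linarith

/-- The inverse Mills ratio `λ(α) = φ(α)/(1 − Φ(α))` is strictly increasing on `ℝ`. -/
theorem inverseMillsRatio_strictMono :
    StrictMono (fun α : ℝ => phi α / (1 - Phi α)) := by
  refine strictMono_of_hasDerivAt_pos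
    (fun x => (hasDerivAt_phi x).div ((hasDerivAt_Phi x).const_sub 1) (one_sub_Phi_pos x).ne')
    fun x => ?_
  have hderiv : -x * phi x * (1 - Phi x) - phi x * -phi x
      = phi x * (phi x - x * (1 - Phi x)) := by ring
  rw [hderiv]
  exact div_pos (mul_pos (phi_pos x) (sub_pos.2 (mul_one_sub_Phi_lt_phi x)))
    (pow_pos (one_sub_Phi_pos x) 2)
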